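/- arXiv:2406.08320 — 3 statements merged into one kernel-verified Lean document; each statement's English description precedes it below -/
import Mathlib

section
/- The 4×4 matrix B_I = diag-permutation matrix with entries B_I[0,0]=e^{iφ1}, B_I[1,2]=e^{iφ2}, B_I[2,1]=e^{iφ3}, B_I[3,3]=e^{iφ4} (all other entries zero) satisfies the braid relation (B⊗I₂)(I₂⊗B)(B⊗I₂) = (I₂⊗B)(B⊗I₂)(I₂⊗B) for all real φ1, φ2, φ3, φ4. -/
open Complex Matrix

/-- `B ⊗ I₂` acting on three qubits: `B` on the first two tensor factors. -/
noncomputable def kronRight (B : Matrix (Fin 4) (Fin 4) ℂ) : Matrix (Fin 8) (Fin 8) ℂ :=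
  Matrix.of fun i j =>
    if i.val % 2 = j.val % 2 then B ⟨i.val / 2, by omega⟩ ⟨j.val / 2, by omega⟩ else 0

/-- `I₂ ⊗ B` acting on three qubits: `B` on the last two tensor factors. -/
noncomputable def kronLeft (B : Matrix (Fin 4) (Fin 4) ℂ) : Matrix (Fin 8) (Fin 8) ℂ :=
  Matrix.of fun i j =>
    if i.val / 4 = j.val / 4 then B ⟨i.val % 4, by omega⟩ ⟨j.val % 4, by omega⟩ else 0

noncomputable def B_I (φ1 φ2 φ3 φ4 : ℝ) : Matrix (Fin 4) (Fin 4) ℂ :=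
  !![Complex.exp (I * φ1), 0, 0, 0;
     0, 0, Complex.exp (I * φ2), 0;
     0, Complex.exp (I * φ3), 0, 0;
     0, 0, 0, Complex.exp (I * φ4)]

/-- a generalized-permutation ("monomial") matrix: entry `(i, P i)` is `a i`, rest zero. -/
noncomputable def mono (P : Fin 8 → Fin 8) (a : Fin 8 → ℂ) : Matrix (Fin 8) (Fin 8) ℂ :=
  Matrix.of fun i j => if j = P i then a i else 0

lemma mono_mul (P Q : Fin 8 → Fin 8) (a b : Fin 8 → ℂ) :
    mono P a * mono Q b = mono (fun i => Q (P i)) (fun i => a i * b (P i)) := by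
  ext i j
  simp only [mono, Matrix.mul_apply, Matrix.of_apply]
  rw [Finset.sum_eq_single (P i)]
  · by_cases h : j = Q (P i) <;> simp [h]
  · intro k _ hk
    simp [hk]
  · simp

def Rp : Fin 8 → Fin 8 := ![0, 1, 4, 5, 2, 3, 6, 7]
def Lp : Fin 8 → Fin 8 := ![0, 2, 1, 3, 4, 6, 5, 7]

noncomputable def cR (φ1 φ2 φ3 φ4 : ℝ) : Fin 8 → ℂ :=
  ![Complex.exp (I * φ1), Complex.exp (I * φ1), Complex.exp (I * φ2), Complex.exp (I * φ2),
    Complex.exp (I * φ3), Complex.exp (I * φ3), Complex.exp (I * φ4), Complex.exp (I * φ4)]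

noncomputable def cL (φ1 φ2 φ3 φ4 : ℝ) : Fin 8 → ℂ :=
  ![Complex.exp (I * φ1), Complex.exp (I * φ2), Complex.exp (I * φ3), Complex.exp (I * φ4),
    Complex.exp (I * φ1), Complex.exp (I * φ2), Complex.exp (I * φ3), Complex.exp (I * φ4)]

lemma kronRight_eq (φ1 φ2 φ3 φ4 : ℝ) :
    kronRight (B_I φ1 φ2 φ3 φ4) = mono Rp (cR φ1 φ2 φ3 φ4) := by
  ext i j
  fin_cases i <;> fin_cases j <;> rfl

lemma kronLeft_eq (φ1 φ2 φ3 φ4 : ℝ) :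
    kronLeft (B_I φ1 φ2 φ3 φ4) = mono Lp (cL φ1 φ2 φ3 φ4) := by
  ext i j
  fin_cases i <;> fin_cases j <;> rfl

lemma Rp_0 : Rp 0 = 0 := rfl
lemma Rp_mk0 : Rp ⟨0, by omega⟩ = 0 := rfl
lemma Lp_0 : Lp 0 = 0 := rfl
lemma Lp_mk0 : Lp ⟨0, by omega⟩ = 0 := rfl
lemma Rp_1 : Rp 1 = 1 := rfl
lemma Rp_mk1 : Rp ⟨1, by omega⟩ = 1 := rfl
lemma Lp_1 : Lp 1 = 2 := rfl
lemma Lp_mk1 : Lp ⟨1, by omega⟩ = 2 := rfl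
lemma Rp_2 : Rp 2 = 4 := rfl
lemma Rp_mk2 : Rp ⟨2, by omega⟩ = 4 := rfl
lemma Lp_2 : Lp 2 = 1 := rfl
lemma Lp_mk2 : Lp ⟨2, by omega⟩ = 1 := rfl
lemma Rp_3 : Rp 3 = 5 := rfl
lemma Rp_mk3 : Rp ⟨3, by omega⟩ = 5 := rfl
lemma Lp_3 : Lp 3 = 3 := rfl
lemma Lp_mk3 : Lp ⟨3, by omega⟩ = 3 := rfl
lemma Rp_4 : Rp 4 = 2 := rfl
lemma Rp_mk4 : Rp ⟨4, by omega⟩ = 2 := rfl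
lemma Lp_4 : Lp 4 = 4 := rfl
lemma Lp_mk4 : Lp ⟨4, by omega⟩ = 4 := rfl
lemma Rp_5 : Rp 5 = 3 := rfl
lemma Rp_mk5 : Rp ⟨5, by omega⟩ = 3 := rfl
lemma Lp_5 : Lp 5 = 6 := rfl
lemma Lp_mk5 : Lp ⟨5, by omega⟩ = 6 := rfl
lemma Rp_6 : Rp 6 = 6 := rfl
lemma Rp_mk6 : Rp ⟨6, by omega⟩ = 6 := rfl
lemma Lp_6 : Lp 6 = 5 := rfl
lemma Lp_mk6 : Lp ⟨6, by omega⟩ = 5 := rfl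
lemma Rp_7 : Rp 7 = 7 := rfl
lemma Rp_mk7 : Rp ⟨7, by omega⟩ = 7 := rfl
lemma Lp_7 : Lp 7 = 7 := rfl
lemma Lp_mk7 : Lp ⟨7, by omega⟩ = 7 := rfl
lemma cR_0 (φ1 φ2 φ3 φ4 : ℝ) : cR φ1 φ2 φ3 φ4 0 = Complex.exp (I * φ1) := rfl
lemma cR_mk0 (φ1 φ2 φ3 φ4 : ℝ) : cR φ1 φ2 φ3 φ4 ⟨0, by omega⟩ = Complex.exp (I * φ1) := rfl
lemma cL_0 (φ1 φ2 φ3 φ4 : ℝ) : cL φ1 φ2 φ3 φ4 0 = Complex.exp (I * φ1) := rfl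
lemma cL_mk0 (φ1 φ2 φ3 φ4 : ℝ) : cL φ1 φ2 φ3 φ4 ⟨0, by omega⟩ = Complex.exp (I * φ1) := rfl
lemma cR_1 (φ1 φ2 φ3 φ4 : ℝ) : cR φ1 φ2 φ3 φ4 1 = Complex.exp (I * φ1) := rfl
lemma cR_mk1 (φ1 φ2 φ3 φ4 : ℝ) : cR φ1 φ2 φ3 φ4 ⟨1, by omega⟩ = Complex.exp (I * φ1) := rfl
lemma cL_1 (φ1 φ2 φ3 φ4 : ℝ) : cL φ1 φ2 φ3 φ4 1 = Complex.exp (I * φ2) := rfl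
lemma cL_mk1 (φ1 φ2 φ3 φ4 : ℝ) : cL φ1 φ2 φ3 φ4 ⟨1, by omega⟩ = Complex.exp (I * φ2) := rfl
lemma cR_2 (φ1 φ2 φ3 φ4 : ℝ) : cR φ1 φ2 φ3 φ4 2 = Complex.exp (I * φ2) := rfl
lemma cR_mk2 (φ1 φ2 φ3 φ4 : ℝ) : cR φ1 φ2 φ3 φ4 ⟨2, by omega⟩ = Complex.exp (I * φ2) := rfl
lemma cL_2 (φ1 φ2 φ3 φ4 : ℝ) : cL φ1 φ2 φ3 φ4 2 = Complex.exp (I * φ3) := rfl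
lemma cL_mk2 (φ1 φ2 φ3 φ4 : ℝ) : cL φ1 φ2 φ3 φ4 ⟨2, by omega⟩ = Complex.exp (I * φ3) := rfl
lemma cR_3 (φ1 φ2 φ3 φ4 : ℝ) : cR φ1 φ2 φ3 φ4 3 = Complex.exp (I * φ2) := rfl
lemma cR_mk3 (φ1 φ2 φ3 φ4 : ℝ) : cR φ1 φ2 φ3 φ4 ⟨3, by omega⟩ = Complex.exp (I * φ2) := rfl
lemma cL_3 (φ1 φ2 φ3 φ4 : ℝ) : cL φ1 φ2 φ3 φ4 3 = Complex.exp (I * φ4) := rfl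
lemma cL_mk3 (φ1 φ2 φ3 φ4 : ℝ) : cL φ1 φ2 φ3 φ4 ⟨3, by omega⟩ = Complex.exp (I * φ4) := rfl
lemma cR_4 (φ1 φ2 φ3 φ4 : ℝ) : cR φ1 φ2 φ3 φ4 4 = Complex.exp (I * φ3) := rfl
lemma cR_mk4 (φ1 φ2 φ3 φ4 : ℝ) : cR φ1 φ2 φ3 φ4 ⟨4, by omega⟩ = Complex.exp (I * φ3) := rfl
lemma cL_4 (φ1 φ2 φ3 φ4 : ℝ) : cL φ1 φ2 φ3 φ4 4 = Complex.exp (I * φ1) := rfl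
lemma cL_mk4 (φ1 φ2 φ3 φ4 : ℝ) : cL φ1 φ2 φ3 φ4 ⟨4, by omega⟩ = Complex.exp (I * φ1) := rfl
lemma cR_5 (φ1 φ2 φ3 φ4 : ℝ) : cR φ1 φ2 φ3 φ4 5 = Complex.exp (I * φ3) := rfl
lemma cR_mk5 (φ1 φ2 φ3 φ4 : ℝ) : cR φ1 φ2 φ3 φ4 ⟨5, by omega⟩ = Complex.exp (I * φ3) := rfl
lemma cL_5 (φ1 φ2 φ3 φ4 : ℝ) : cL φ1 φ2 φ3 φ4 5 = Complex.exp (I * φ2) := rfl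
lemma cL_mk5 (φ1 φ2 φ3 φ4 : ℝ) : cL φ1 φ2 φ3 φ4 ⟨5, by omega⟩ = Complex.exp (I * φ2) := rfl
lemma cR_6 (φ1 φ2 φ3 φ4 : ℝ) : cR φ1 φ2 φ3 φ4 6 = Complex.exp (I * φ4) := rfl
lemma cR_mk6 (φ1 φ2 φ3 φ4 : ℝ) : cR φ1 φ2 φ3 φ4 ⟨6, by omega⟩ = Complex.exp (I * φ4) := rfl
lemma cL_6 (φ1 φ2 φ3 φ4 : ℝ) : cL φ1 φ2 φ3 φ4 6 = Complex.exp (I * φ3) := rfl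
lemma cL_mk6 (φ1 φ2 φ3 φ4 : ℝ) : cL φ1 φ2 φ3 φ4 ⟨6, by omega⟩ = Complex.exp (I * φ3) := rfl
lemma cR_7 (φ1 φ2 φ3 φ4 : ℝ) : cR φ1 φ2 φ3 φ4 7 = Complex.exp (I * φ4) := rfl
lemma cR_mk7 (φ1 φ2 φ3 φ4 : ℝ) : cR φ1 φ2 φ3 φ4 ⟨7, by omega⟩ = Complex.exp (I * φ4) := rfl
lemma cL_7 (φ1 φ2 φ3 φ4 : ℝ) : cL φ1 φ2 φ3 φ4 7 = Complex.exp (I * φ4) := rfl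
lemma cL_mk7 (φ1 φ2 φ3 φ4 : ℝ) : cL φ1 φ2 φ3 φ4 ⟨7, by omega⟩ = Complex.exp (I * φ4) := rfl

theorem B_I_braid (φ1 φ2 φ3 φ4 : ℝ) :
    kronRight (B_I φ1 φ2 φ3 φ4) * kronLeft (B_I φ1 φ2 φ3 φ4) * kronRight (B_I φ1 φ2 φ3 φ4)
      = kronLeft (B_I φ1 φ2 φ3 φ4) * kronRight (B_I φ1 φ2 φ3 φ4)
        * kronLeft (B_I φ1 φ2 φ3 φ4) := by
  have mono_congr : ∀ {P Q : Fin 8 → Fin 8} {a b : Fin 8 → ℂ},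
      P = Q → a = b → mono P a = mono Q b := by
    rintro P Q a b rfl rfl; rfl
  simp only [kronRight_eq, kronLeft_eq, mono_mul]
  refine mono_congr ?_ ?_
  · funext i; revert i; decide
  · funext i
    fin_cases i <;>
      simp only [Rp_0, Rp_mk0, Lp_0, Lp_mk0, Rp_1, Rp_mk1, Lp_1, Lp_mk1, Rp_2, Rp_mk2, Lp_2, Lp_mk2, Rp_3, Rp_mk3, Lp_3, Lp_mk3, Rp_4, Rp_mk4, Lp_4, Lp_mk4, Rp_5, Rp_mk5, Lp_5, Lp_mk5, Rp_6, Rp_mk6, Lp_6, Lp_mk6, Rp_7, Rp_mk7, Lp_7, Lp_mk7, cR_0, cR_mk0, cL_0, cL_mk0, cR_1, cR_mk1, cL_1, cL_mk1, cR_2, cR_mk2, cL_2, cL_mk2, cR_3, cR_mk3, cL_3, cL_mk3, cR_4, cR_mk4, cL_4, cL_mk4, cR_5, cR_mk5, cL_5, cL_mk5, cR_6, cR_mk6, cL_6, cL_mk6, cR_7, cR_mk7, cL_7, cL_mk7] <;> ring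
end

section
/- The 4×4 matrix B_III with entries B_III[0,0]=cos φ1, B_III[0,3]=sin φ1 e^{iφ2}, B_III[1,1]=-i sin φ1, B_III[1,2]=-cos φ1, B_III[2,1]=-cos φ1, B_III[2,2]=-i sin φ1, B_III[3,0]=-sin φ1 e^{-iφ2}, B_III[3,3]=cos φ1 (other entries zero) satisfies the braid relation (B⊗I₂)(I₂⊗B)(B⊗I₂) = (I₂⊗B)(B⊗I₂)(I₂⊗B) for all real φ1, φ2. -/
open Complex Matrix

noncomputable def B_III (φ1 φ2 : ℝ) : Matrix (Fin 4) (Fin 4) ℂ :=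
  !![(Real.cos φ1 : ℂ), 0, 0, (Real.sin φ1 : ℂ) * Complex.exp (I * φ2);
     0, -I * Real.sin φ1, -(Real.cos φ1 : ℂ), 0;
     0, -(Real.cos φ1 : ℂ), -I * Real.sin φ1, 0;
     -(Real.sin φ1 : ℂ) * Complex.exp (-I * φ2), 0, 0, (Real.cos φ1 : ℂ)]


section VecAux
variable {α : Type*} {m : ℕ}

@[simp] lemma cons_val_five (x : α) (u : Fin (m + 5) → α) :
    Matrix.vecCons x u 5 = vecHead (vecTail (vecTail (vecTail (vecTail u)))) := rfl

@[simp] lemma cons_val_six (x : α) (u : Fin (m + 6) → α) :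
    Matrix.vecCons x u 6 = vecHead (vecTail (vecTail (vecTail (vecTail (vecTail u))))) := rfl

@[simp] lemma cons_val_seven (x : α) (u : Fin (m + 7) → α) :
    Matrix.vecCons x u 7 = vecHead (vecTail (vecTail (vecTail (vecTail (vecTail (vecTail u)))))) := rfl

@[simp] lemma vecHead_const (c : α) : vecHead (fun _ : Fin (m+1) => c) = c := rfl

@[simp] lemma vecTail_const (c : α) : vecTail (fun _ : Fin (m+1) => c) = fun _ : Fin m => c := rfl

end VecAux

section Gen
variable (a b s t : ℂ)

noncomputable def Mgen : Matrix (Fin 4) (Fin 4) ℂ :=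
  !![a, 0, 0, s; 0, b, -a, 0; 0, -a, b, 0; t, 0, 0, a]

set_option maxHeartbeats 1600000

lemma hR : kronRight (Mgen a b s t) =
    !![a, 0, 0, 0, 0, 0, s, 0;
       0, a, 0, 0, 0, 0, 0, s;
       0, 0, b, 0, -a, 0, 0, 0;
       0, 0, 0, b, 0, -a, 0, 0;
       0, 0, -a, 0, b, 0, 0, 0;
       0, 0, 0, -a, 0, b, 0, 0;
       t, 0, 0, 0, 0, 0, a, 0;
       0, t, 0, 0, 0, 0, 0, a] := by
  ext i j; fin_cases i <;> fin_cases j <;> rfl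

lemma hL : kronLeft (Mgen a b s t) =
    !![a, 0, 0, s, 0, 0, 0, 0;
       0, b, -a, 0, 0, 0, 0, 0;
       0, -a, b, 0, 0, 0, 0, 0;
       t, 0, 0, a, 0, 0, 0, 0;
       0, 0, 0, 0, a, 0, 0, s;
       0, 0, 0, 0, 0, b, -a, 0;
       0, 0, 0, 0, 0, -a, b, 0;
       0, 0, 0, 0, t, 0, 0, a] := by
  ext i j; fin_cases i <;> fin_cases j <;> rfl

lemma braid_gen (h : s * t = b * b) :
    kronRight (Mgen a b s t) * kronLeft (Mgen a b s t) * kronRight (Mgen a b s t)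
      = kronLeft (Mgen a b s t) * kronRight (Mgen a b s t) * kronLeft (Mgen a b s t) := by
  rw [hR, hL]
  have hRL : (!![a, 0, 0, 0, 0, 0, s, 0;
       0, a, 0, 0, 0, 0, 0, s;
       0, 0, b, 0, -a, 0, 0, 0;
       0, 0, 0, b, 0, -a, 0, 0;
       0, 0, -a, 0, b, 0, 0, 0;
       0, 0, 0, -a, 0, b, 0, 0;
       t, 0, 0, 0, 0, 0, a, 0;
       0, t, 0, 0, 0, 0, 0, a] : Matrix (Fin 8) (Fin 8) ℂ) *
      !![a, 0, 0, s, 0, 0, 0, 0;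
       0, b, -a, 0, 0, 0, 0, 0;
       0, -a, b, 0, 0, 0, 0, 0;
       t, 0, 0, a, 0, 0, 0, 0;
       0, 0, 0, 0, a, 0, 0, s;
       0, 0, 0, 0, 0, b, -a, 0;
       0, 0, 0, 0, 0, -a, b, 0;
       0, 0, 0, 0, t, 0, 0, a] =
      !![a*a, 0, 0, a*s, 0, -a*s, b*s, 0;
       0, a*b, -a*a, 0, s*t, 0, 0, a*s;
       0, -a*b, b*b, 0, -a*a, 0, 0, -a*s;
       b*t, 0, 0, a*b, 0, -a*b, a*a, 0;
       0, a*a, -a*b, 0, a*b, 0, 0, b*s;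
       -a*t, 0, 0, -a*a, 0, b*b, -a*b, 0;
       a*t, 0, 0, s*t, 0, -a*a, a*b, 0;
       0, b*t, -a*t, 0, a*t, 0, 0, a*a] := by
    ext i j
    fin_cases i <;> fin_cases j <;>
      simp [Matrix.mul_apply, Fin.sum_univ_eight, cons_val_five, cons_val_six, cons_val_seven, vecHead_const, vecTail_const] <;> ring
  have hLR : (!![a, 0, 0, s, 0, 0, 0, 0;
       0, b, -a, 0, 0, 0, 0, 0;
       0, -a, b, 0, 0, 0, 0, 0;
       t, 0, 0, a, 0, 0, 0, 0;
       0, 0, 0, 0, a, 0, 0, s;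
       0, 0, 0, 0, 0, b, -a, 0;
       0, 0, 0, 0, 0, -a, b, 0;
       0, 0, 0, 0, t, 0, 0, a] : Matrix (Fin 8) (Fin 8) ℂ) *
      !![a, 0, 0, 0, 0, 0, s, 0;
       0, a, 0, 0, 0, 0, 0, s;
       0, 0, b, 0, -a, 0, 0, 0;
       0, 0, 0, b, 0, -a, 0, 0;
       0, 0, -a, 0, b, 0, 0, 0;
       0, 0, 0, -a, 0, b, 0, 0;
       t, 0, 0, 0, 0, 0, a, 0;
       0, t, 0, 0, 0, 0, 0, a] =
      !![a*a, 0, 0, b*s, 0, -a*s, a*s, 0;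
       0, a*b, -a*b, 0, a*a, 0, 0, b*s;
       0, -a*a, b*b, 0, -a*b, 0, 0, -a*s;
       a*t, 0, 0, a*b, 0, -a*a, s*t, 0;
       0, s*t, -a*a, 0, a*b, 0, 0, a*s;
       -a*t, 0, 0, -a*b, 0, b*b, -a*a, 0;
       b*t, 0, 0, a*a, 0, -a*b, a*b, 0;
       0, a*t, -a*t, 0, b*t, 0, 0, a*a] := by
    ext i j
    fin_cases i <;> fin_cases j <;>
      simp [Matrix.mul_apply, Fin.sum_univ_eight, cons_val_five, cons_val_six, cons_val_seven, vecHead_const, vecTail_const] <;> ring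
  rw [hRL, hLR]
  ext i j
  fin_cases i <;> fin_cases j <;>
    simp [Matrix.mul_apply, Fin.sum_univ_eight, cons_val_five, cons_val_six, cons_val_seven, vecHead_const, vecTail_const] <;>
    first
      | ring1
      | linear_combination a * h
      | linear_combination (-a) * h

end Gen

theorem B_III_braid (φ1 φ2 : ℝ) :
    kronRight (B_III φ1 φ2) * kronLeft (B_III φ1 φ2) * kronRight (B_III φ1 φ2)
      = kronLeft (B_III φ1 φ2) * kronRight (B_III φ1 φ2) * kronLeft (B_III φ1 φ2) := by
  have he : Complex.exp (I * φ2) * Complex.exp (-I * φ2) = 1 := by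
    rw [← Complex.exp_add]; ring_nf; exact Complex.exp_zero
  have h : ((Real.sin φ1 : ℂ) * Complex.exp (I * φ2)) *
      (-(Real.sin φ1 : ℂ) * Complex.exp (-I * φ2)) =
      (-I * Real.sin φ1) * (-I * Real.sin φ1) := by
    linear_combination (-(Real.sin φ1 : ℂ)^2) * he + (-(Real.sin φ1 : ℂ)^2) * Complex.I_mul_I
  have hB : B_III φ1 φ2 = Mgen (Real.cos φ1 : ℂ) (-I * Real.sin φ1)
      ((Real.sin φ1 : ℂ) * Complex.exp (I * φ2))
      (-(Real.sin φ1 : ℂ) * Complex.exp (-I * φ2)) := rfl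
  rw [hB]
  exact braid_gen _ _ _ _ h
end

section
/- For the matrix B_I with φ1 = φ4, the identity B_I = (I₂⊗σx)·B_II·(I₂⊗σx) holds, where B_II uses the parameters (φ1, φ2, φ3). -/
open Complex Matrix

/-- Kronecker product of two 2×2 matrices as a 4×4 matrix in the computational
basis ordering {|00⟩,|01⟩,|10⟩,|11⟩}. -/
def kron4 (A B : Matrix (Fin 2) (Fin 2) ℂ) : Matrix (Fin 4) (Fin 4) ℂ :=
  Matrix.of fun i j =>
    A ⟨i.val / 2, by omega⟩ ⟨j.val / 2, by omega⟩ * B ⟨i.val % 2, by omega⟩ ⟨j.val % 2, by omega⟩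

def sigmaX : Matrix (Fin 2) (Fin 2) ℂ := !![0, 1; 1, 0]

noncomputable def B_II (φ1 φ2 φ3 : ℝ) : Matrix (Fin 4) (Fin 4) ℂ :=
  !![0, 0, 0, Complex.exp (I * φ2);
     0, Complex.exp (I * φ1), 0, 0;
     0, 0, Complex.exp (I * φ1), 0;
     Complex.exp (I * φ3), 0, 0, 0]

theorem B_I_eq_conj_B_II (φ1 φ2 φ3 : ℝ) :
    B_I φ1 φ2 φ3 φ1 = kron4 1 sigmaX * B_II φ1 φ2 φ3 * kron4 1 sigmaX := by
  ext i j
  fin_cases i <;> fin_cases j <;>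
    simp [B_I, B_II, kron4, sigmaX, Matrix.mul_apply, Fin.sum_univ_four, Matrix.one_apply, Fin.ext_iff]
end
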